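/- For any probability generating function g of an ℕ-valued random variable and any s ∈ [0,1], 1 − g(s) ≥ (1 − g(0))·(1 − s). Consequently, for any probability generating functions g_0, …, g_{n−1} of ℕ-valued random variables, 1 − (g_{n−1} ∘ ⋯ ∘ g_0)(0) ≥ Π_{i=0}^{n−1} (1 − g_i(0)). -/

import Mathlib

open MeasureTheory Filter ENNReal NNReal

noncomputable section

/-- The probability generating function `s ↦ Σ_k p_k s^k` of the `ℕ`-valued distribution with
weights `p`. -/
def pgf (p : ℕ → ℝ≥0) (s : ℝ) : ℝ := ∑' k : ℕ, (p k : ℝ) * s ^ k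

/-- `compIter p n = (g_{n-1} ∘ ⋯ ∘ g_0)(0)`, where `g_i` is the p.g.f. with weights `p i`. -/
def compIter (p : ℕ → ℕ → ℝ≥0) : ℕ → ℝ
  | 0 => 0
  | n + 1 => pgf (p n) (compIter p n)

/-! Writing `1 = Σ_k p_k`, one has `1 - g(s) = Σ_{k ≥ 1} p_k (1 - s^k)`, and `s^k ≤ s` for
`k ≥ 1` gives `1 - g(s) ≥ (1 - s) Σ_{k ≥ 1} p_k = (1 - s)(1 - g(0))`. Iterating this along
`x_{n+1} = g_n(x_n)`, which stays in `[0, 1]`, yields the product bound. -/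

lemma hasSum_coe_of_tsum_eq_one {p : ℕ → ℝ≥0} (hp : ∑' k, p k = 1) :
    HasSum (fun k => (p k : ℝ)) 1 := by
  have hsum : Summable p := by
    by_contra h
    rw [tsum_eq_zero_of_not_summable h] at hp
    exact zero_ne_one hp
  simpa [hp] using (NNReal.hasSum_coe.mpr hsum.hasSum)

lemma summable_pgf {p : ℕ → ℝ≥0} (hp : Summable fun k => (p k : ℝ)) {s : ℝ} (hs : |s| ≤ 1) :
    Summable fun k => (p k : ℝ) * s ^ k := by
  refine hp.of_norm_bounded fun k => ?_
  rw [norm_mul, Real.norm_of_nonneg (p k).coe_nonneg, Real.norm_eq_abs, abs_pow]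
  exact mul_le_of_le_one_right (p k).coe_nonneg (pow_le_one₀ (abs_nonneg s) hs)

lemma pgf_zero (p : ℕ → ℝ≥0) : pgf p 0 = p 0 := by
  rw [pgf, tsum_eq_single 0 fun k hk => by simp [zero_pow hk]]
  simp

lemma pgf_nonneg (p : ℕ → ℝ≥0) {s : ℝ} (hs : 0 ≤ s) : 0 ≤ pgf p s :=
  tsum_nonneg fun k => by positivity

lemma pgf_le_one {p : ℕ → ℝ≥0} (hp : ∑' k, p k = 1) {s : ℝ} (hs₀ : 0 ≤ s) (hs₁ : s ≤ 1) :
    pgf p s ≤ 1 := by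
  have hP := hasSum_coe_of_tsum_eq_one hp
  calc pgf p s ≤ ∑' k, (p k : ℝ) :=
        (summable_pgf hP.summable (abs_le.mpr ⟨by linarith, hs₁⟩)).tsum_le_tsum
          (fun k => mul_le_of_le_one_right (p k).coe_nonneg (pow_le_one₀ hs₀ hs₁)) hP.summable
    _ = 1 := hP.tsum_eq

theorem one_sub_pgf_zero_mul_le {p : ℕ → ℝ≥0} (hp : ∑' k, p k = 1) {s : ℝ} (hs₀ : 0 ≤ s)
    (hs₁ : s ≤ 1) : (1 - pgf p 0) * (1 - s) ≤ 1 - pgf p s := by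
  have hP := hasSum_coe_of_tsum_eq_one hp
  have hgs := summable_pgf hP.summable (abs_le.mpr ⟨by linarith, hs₁⟩)
  have htail : Summable fun k => (p (k + 1) : ℝ) :=
    (_root_.summable_nat_add_iff 1).mpr hP.summable
  have htail_s : Summable fun k => (p (k + 1) : ℝ) * s ^ (k + 1) :=
    (_root_.summable_nat_add_iff 1).mpr hgs
  have h_one : 1 = (p 0 : ℝ) + ∑' k, (p (k + 1) : ℝ) := by
    rw [← hP.tsum_eq, hP.summable.tsum_eq_zero_add]
  have h_gs : pgf p s = (p 0 : ℝ) + ∑' k, (p (k + 1) : ℝ) * s ^ (k + 1) := by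
    rw [pgf, hgs.tsum_eq_zero_add, pow_zero, mul_one]
  calc (1 - pgf p 0) * (1 - s) = ∑' k, (p (k + 1) : ℝ) * (1 - s) := by
        rw [pgf_zero, _root_.tsum_mul_right]; congr 1; linarith
    _ ≤ ∑' k, (p (k + 1) : ℝ) * (1 - s ^ (k + 1)) := by
        have hdiff : Summable fun k => (p (k + 1) : ℝ) * (1 - s ^ (k + 1)) := by
          simpa only [mul_sub, mul_one] using htail.sub htail_s
        refine (htail.mul_right _).tsum_le_tsum (fun k => ?_) hdiff
        have hpow : s ^ (k + 1) ≤ s := pow_le_of_le_one hs₀ hs₁ k.succ_ne_zero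
        exact mul_le_mul_of_nonneg_left (by linarith) (p (k + 1)).coe_nonneg
    _ = 1 - pgf p s := by
        simp only [mul_sub, mul_one]
        rw [htail.tsum_sub htail_s]
        linarith

lemma compIter_mem_Icc {p : ℕ → ℕ → ℝ≥0} (hp : ∀ i, ∑' k, p i k = 1) (n : ℕ) :
    compIter p n ∈ Set.Icc 0 1 := by
  induction n with
  | zero => simp [compIter]
  | succ n ih => exact ⟨pgf_nonneg _ ih.1, pgf_le_one (hp n) ih.1 ih.2⟩

theorem prod_one_sub_pgf_zero_le {p : ℕ → ℕ → ℝ≥0} (hp : ∀ i, ∑' k, p i k = 1) (n : ℕ) :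
    ∏ i ∈ Finset.range n, (1 - pgf (p i) 0) ≤ 1 - compIter p n := by
  induction n with
  | zero => simp [compIter]
  | succ n ih =>
    have hfactor : 0 ≤ 1 - pgf (p n) 0 := sub_nonneg.mpr (pgf_le_one (hp n) le_rfl zero_le_one)
    obtain ⟨hx₀, hx₁⟩ := compIter_mem_Icc hp n
    calc ∏ i ∈ Finset.range (n + 1), (1 - pgf (p i) 0)
        ≤ (1 - pgf (p n) 0) * (1 - compIter p n) := by
          rw [Finset.prod_range_succ, mul_comm]; exact mul_le_mul_of_nonneg_left ih hfactor
      _ ≤ 1 - compIter p (n + 1) := one_sub_pgf_zero_mul_le (hp n) hx₀ hx₁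

/-- For any p.g.f. `g` of an `ℕ`-valued random variable and `s ∈ [0,1]`,
`1 − g(s) ≥ (1 − g(0))·(1 − s)`; consequently, for p.g.f.s `g_0, …, g_{n−1}`,
`1 − (g_{n−1} ∘ ⋯ ∘ g_0)(0) ≥ Π_{i<n} (1 − g_i(0))`. -/
theorem stmt8 :
    (∀ p : ℕ → ℝ≥0, (∑' k, p k) = 1 → ∀ s : ℝ, 0 ≤ s → s ≤ 1 →
      (1 - pgf p 0) * (1 - s) ≤ 1 - pgf p s) ∧
    (∀ p : ℕ → ℕ → ℝ≥0, (∀ i, (∑' k, p i k) = 1) → ∀ n : ℕ,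
      ∏ i ∈ Finset.range n, (1 - pgf (p i) 0) ≤ 1 - compIter p n) :=
  ⟨fun _ hp _ hs₀ hs₁ => one_sub_pgf_zero_mul_le hp hs₀ hs₁,
    fun _ hp n => prod_one_sub_pgf_zero_le hp n⟩

end
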